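/- Let n ≥ 1. Then the polynomial L_n(x) := Σ_{σ ∈ S_n} x^{L(σ)} is symmetric of degree ⌊n²/4⌋; i.e., for every k with 0 ≤ k ≤ ⌊n²/4⌋, the number of permutations σ ∈ S_n with L(σ) = k equals the number of permutations σ ∈ S_n with L(σ) = ⌊n²/4⌋ − k. -/

import Mathlib

/-!
Left multiplication by the reversal `w₀ : i ↦ n - 1 - i` of `Fin n` reverses the order of the
values of `σ`, so it turns every inversion of `σ` into a non-inversion and vice versa. Hence
`L(σ) + L(w₀σ)` is the number of pairs `i < j` of positions of different parity, which is
`⌈n/2⌉ ⌊n/2⌋ = ⌊n²/4⌋`, and `σ ↦ w₀σ` is an involution of `S_n` exchanging the permutations of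
odd length `k` with those of odd length `⌊n²/4⌋ - k`.
-/

namespace OddLength

/-- The odd length of a permutation `σ ∈ S_n`: the number of inversions `(i,j)`, `i < j`,
`σ(i) > σ(j)`, whose entries have different parities. -/
def oddLength {n : ℕ} (σ : Equiv.Perm (Fin n)) : ℕ :=
  (Finset.univ.filter fun p : Fin n × Fin n =>
    p.1 < p.2 ∧ σ p.2 < σ p.1 ∧ (p.1 : ℕ) % 2 ≠ (p.2 : ℕ) % 2).card

open Finset

theorem card_filter_lt_and_not_iff {α : Type*} [LinearOrder α] (s : Finset α) (P : α → Prop)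
    [DecidablePred P] :
    #{p ∈ s ×ˢ s | p.1 < p.2 ∧ ¬(P p.1 ↔ P p.2)} = #{a ∈ s | P a} * #{a ∈ s | ¬P a} := by
  rw [← card_product]
  symm
  refine card_nbij' (fun p => (min p.1 p.2, max p.1 p.2))
    (fun p => if P p.1 then p else p.swap) ?_ ?_ ?_ ?_ <;>
  · rintro ⟨a, b⟩ h
    simp only [coe_product, coe_filter, Set.mem_prod, Set.mem_ofPred] at h ⊢
    grind

theorem card_filter_val_eq_count (n : ℕ) (P : ℕ → Prop) [DecidablePred P] :
    #{i : Fin n | P i} = Nat.count P n := by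
  induction n generalizing P with
  | zero => simp
  | succ n ih => rw [Fin.card_filter_univ_succ', Nat.count_succ', ← ih, add_comm]; congr

theorem count_mod_two_eq_zero (n : ℕ) : Nat.count (· % 2 = 0) n = (n + 1) / 2 := by
  induction n with
  | zero => rfl
  | succ n ih => rw [Nat.count_succ, ih]; split <;> omega

theorem count_mod_two_ne_zero (n : ℕ) : Nat.count (¬· % 2 = 0) n = n / 2 := by
  induction n with
  | zero => rfl
  | succ n ih => rw [Nat.count_succ, ih]; split <;> omega

theorem succ_div_two_mul_div_two (n : ℕ) : (n + 1) / 2 * (n / 2) = n ^ 2 / 4 := by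
  rcases Nat.even_or_odd' n with ⟨m, rfl | rfl⟩
  · rw [show (2 * m + 1) / 2 = m by omega, show 2 * m / 2 = m by omega,
      show (2 * m) ^ 2 = 4 * (m * m) by ring]
    omega
  · rw [show (2 * m + 1 + 1) / 2 = m + 1 by omega, show (2 * m + 1) / 2 = m by omega,
      show (2 * m + 1) ^ 2 = 4 * ((m + 1) * m) + 1 by ring]
    omega

def oddPairs (n : ℕ) : Finset (Fin n × Fin n) :=
  {p | p.1 < p.2 ∧ (p.1 : ℕ) % 2 ≠ (p.2 : ℕ) % 2}

theorem mem_oddPairs {n : ℕ} {p : Fin n × Fin n} :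
    p ∈ oddPairs n ↔ p.1 < p.2 ∧ (p.1 : ℕ) % 2 ≠ (p.2 : ℕ) % 2 := by
  simp [oddPairs]

theorem card_oddPairs (n : ℕ) : #(oddPairs n) = n ^ 2 / 4 := by
  have h := card_filter_lt_and_not_iff (univ : Finset (Fin n)) fun i => (i : ℕ) % 2 = 0
  rw [card_filter_val_eq_count n (· % 2 = 0), card_filter_val_eq_count n (¬· % 2 = 0),
    count_mod_two_eq_zero, count_mod_two_ne_zero, succ_div_two_mul_div_two,
    univ_product_univ] at h
  rw [← h, oddPairs]
  congr 1
  ext p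
  simp only [mem_filter, mem_univ, true_and]
  omega

theorem oddLength_eq_card_filter {n : ℕ} (σ : Equiv.Perm (Fin n)) :
    oddLength σ = #{p ∈ oddPairs n | σ p.2 < σ p.1} := by
  rw [oddLength, oddPairs, filter_filter]
  congr 1
  ext p
  simp only [mem_filter, mem_univ, true_and]
  tauto

theorem oddLength_add_oddLength_revPerm_mul {n : ℕ} (σ : Equiv.Perm (Fin n)) :
    oddLength σ + oddLength (Fin.revPerm * σ) = n ^ 2 / 4 := by
  rw [oddLength_eq_card_filter, oddLength_eq_card_filter, ← card_oddPairs,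
    ← card_filter_add_card_filter_not (s := oddPairs n) fun p => σ p.2 < σ p.1]
  congr 1
  refine congrArg card (filter_congr fun p hp => ?_)
  have hne : σ p.1 ≠ σ p.2 := σ.injective.ne (mem_oddPairs.1 hp).1.ne
  simp only [Equiv.Perm.mul_apply, Fin.revPerm_apply, Fin.rev_lt_rev, not_lt]
  exact ⟨le_of_lt, fun h => lt_of_le_of_ne h hne⟩

theorem oddLength_le {n : ℕ} (σ : Equiv.Perm (Fin n)) : oddLength σ ≤ n ^ 2 / 4 :=
  (oddLength_add_oddLength_revPerm_mul σ).le.trans' le_self_add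

theorem oddLength_revPerm_mul {n : ℕ} (σ : Equiv.Perm (Fin n)) :
    oddLength (Fin.revPerm * σ) = n ^ 2 / 4 - oddLength σ := by
  have := oddLength_add_oddLength_revPerm_mul σ
  omega

theorem oddLength_one {n : ℕ} : oddLength (1 : Equiv.Perm (Fin n)) = 0 := by
  rw [oddLength_eq_card_filter, card_eq_zero, filter_eq_empty_iff]
  exact fun p hp => (mem_oddPairs.1 hp).1.asymm

theorem statement10_general (n : ℕ) :
    (∀ σ : Equiv.Perm (Fin n), oddLength σ ≤ n ^ 2 / 4) ∧
    (∃ σ : Equiv.Perm (Fin n), oddLength σ = n ^ 2 / 4) ∧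
    (∀ k : ℕ, k ≤ n ^ 2 / 4 →
      (Finset.univ.filter fun σ : Equiv.Perm (Fin n) => oddLength σ = k).card =
      (Finset.univ.filter fun σ : Equiv.Perm (Fin n) =>
        oddLength σ = n ^ 2 / 4 - k).card) := by
  refine ⟨oddLength_le, ⟨Fin.revPerm, ?_⟩, fun k hk => ?_⟩
  · simpa [oddLength_one] using oddLength_revPerm_mul (1 : Equiv.Perm (Fin n))
  · refine card_equiv (Equiv.mulLeft Fin.revPerm) fun σ => ?_
    have := oddLength_le σ
    simp only [mem_filter, mem_univ, true_and, Equiv.coe_mulLeft, oddLength_revPerm_mul]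
    omega

/-- The generating polynomial `L_n(x) = Σ_{σ ∈ S_n} x^{L(σ)}` is symmetric
of degree `⌊n²/4⌋`: all odd lengths are at most `⌊n²/4⌋`, the value `⌊n²/4⌋` is attained,
and for every `0 ≤ k ≤ ⌊n²/4⌋` the number of permutations with odd length `k` equals the
number of permutations with odd length `⌊n²/4⌋ - k`. -/
theorem statement10 (n : ℕ) (hn : 1 ≤ n) :
    (∀ σ : Equiv.Perm (Fin n), oddLength σ ≤ n ^ 2 / 4) ∧
    (∃ σ : Equiv.Perm (Fin n), oddLength σ = n ^ 2 / 4) ∧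
    (∀ k : ℕ, k ≤ n ^ 2 / 4 →
      (Finset.univ.filter fun σ : Equiv.Perm (Fin n) => oddLength σ = k).card =
      (Finset.univ.filter fun σ : Equiv.Perm (Fin n) =>
        oddLength σ = n ^ 2 / 4 - k).card) :=
  statement10_general n

end OddLength
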